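/- In the icosahedron thickening setting: if G is a thickening of (G_0, ∅) with weights w_i = |X_{v_i}| and no brace of G is Tihany, then for the brace {x_1, x_3} (with x_i ∈ X_{v_i}) one has w_4 + w_5 + w_6 + w_7 + w_8 + w_9 + w_{10} + w_{11} ≤ 2(w_0 + w_1 + w_2 + w_3 − 2). -/

import Mathlib

open SimpleGraph

/-- The edges of the icosahedron on vertices `v_0, …, v_11`. -/
def icoEdges : List (Fin 12 × Fin 12) :=
  [(1,2),(2,3),(3,4),(4,5),(5,6),(6,7),(7,8),(8,9),(9,10),(10,1),
   (1,3),(2,4),(3,5),(4,6),(5,7),(6,8),(7,9),(8,10),(9,1),(10,2),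
   (0,1),(0,3),(0,5),(0,7),(0,9),
   (11,2),(11,4),(11,6),(11,8),(11,10)]

/-- The icosahedron graph. -/
def icosahedron : SimpleGraph (Fin 12) where
  Adj a b := a ≠ b ∧ ((a, b) ∈ icoEdges ∨ (b, a) ∈ icoEdges)
  symm := ⟨fun _ _ h => ⟨h.1.symm, h.2.symm⟩⟩
  loopless := ⟨fun _ h => h.1 rfl⟩

/-!
Write `S = V \ {x₁, x₃}` and let `m = χ(G[S])`; since `{x₁, x₃}` is not Tihany, `m + 2 ≤ χ(G)`.
Every colour class of an `m`-colouring of `G[S]` must contain a common neighbour of `x₁` and `x₃`: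
otherwise giving `x₁` that colour, and a fresh colour to `x₃` and to the neighbours of `x₁` in
the class, would colour `G` with `m + 1` colours. In the icosahedron the common neighbours of
`v₁` and `v₃` lie in `{v₀, v₁, v₂, v₃}`, so `m ≤ w₀ + w₁ + w₂ + w₃ - 2`. Since `α(G) = α(G₀) = 3`,
a class containing such a vertex meets `X₄ ∪ ⋯ ∪ X₁₁` in at most two vertices, whence
`w₄ + ⋯ + w₁₁ ≤ 2m`.
-/

open Finset

namespace SimpleGraph

variable {V α : Type*} {G : SimpleGraph V}

def IsTihany (G : SimpleGraph V) (x y : V) : Prop :=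
  G.chromaticNumber - 1 ≤ (G.induce ({x, y} : Set V)ᶜ).chromaticNumber

theorem IndepSetFree.comap {W : Type*} {H : SimpleGraph W} (e : H ↪g G) {n : ℕ}
    (h : G.IndepSetFree n) : H.IndepSetFree n := by
  classical
  intro t ht
  refine h (t.map e.toEmbedding) ⟨?_, by rw [card_map, ht.card_eq]⟩
  intro p hp q hq hpq hGpq
  obtain ⟨u, hu, rfl⟩ := mem_map.1 hp
  obtain ⟨v, hv, rfl⟩ := mem_map.1 hq
  exact ht.isIndepSet hu hv (fun h => hpq (h ▸ rfl)) (e.map_adj_iff.1 hGpq)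

theorem indepSetFree_of_adj_of_ne {W : Type*} {K : SimpleGraph W} (f : V → W)
    (hadj : ∀ u v, u ≠ v → (f u = f v ∨ K.Adj (f u) (f v)) → G.Adj u v) {n : ℕ}
    (hK : K.IndepSetFree n) : G.IndepSetFree n := by
  classical
  intro t ht
  have hinj : Set.InjOn f t := fun u hu v hv h =>
    by_contra fun hne => ht.isIndepSet hu hv hne (hadj u v hne (.inl h))
  refine hK (t.image f) ⟨?_, by rw [card_image_of_injOn hinj, ht.card_eq]⟩
  intro p hp q hq hpq hKpq
  obtain ⟨u, hu, rfl⟩ := mem_image.1 hp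
  obtain ⟨v, hv, rfl⟩ := mem_image.1 hq
  have huv : u ≠ v := fun h => hpq (h ▸ rfl)
  exact ht.isIndepSet hu hv huv (hadj u v huv (.inr hKpq))

theorem card_le_mul_card_of_indepSetFree [Fintype α] (c : G.Coloring α) {k : ℕ}
    (hG : G.IndepSetFree (k + 2)) (T : Finset V) (hT : ∀ a, ∃ v ∉ T, c v = a) :
    #T ≤ k * Fintype.card α := by
  classical
  calc #T ≤ k * #(T.image c) := card_le_mul_card_image T k fun a _ => ?_
    _ ≤ k * Fintype.card α := Nat.mul_le_mul_left _ (card_le_univ _)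
  by_contra! hlt
  obtain ⟨v, hvT, hva⟩ := hT a
  obtain ⟨F, hFsub, hFcard⟩ := exists_subset_card_eq (Nat.succ_le_of_lt hlt)
  have hcol : ∀ u ∈ insert v F, c u = a := by
    simp only [mem_insert]
    rintro u (rfl | hu)
    · exact hva
    · exact (mem_filter.1 (hFsub hu)).2
  have hvF : v ∉ F := fun hv => hvT (mem_filter.1 (hFsub hv)).1
  refine hG (insert v F) ⟨fun u hu w hw _ huw => c.valid huw ?_, ?_⟩
  · exact (hcol u hu).trans (hcol w hw).symm
  · rw [card_insert_of_notMem hvF, hFcard]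

section Brace

variable {x y : V}

/-- The new colour `none` goes to `y` and to the neighbours of `x` in the class `a`, which are
non-neighbours of `y` by `ha`; `x` takes the colour `a`, now free of its neighbours. -/
theorem nonempty_coloring_option_of_induce_compl_pair (hxy : x ≠ y)
    (c : (G.induce ({x, y} : Set V)ᶜ).Coloring α) (a : α)
    (ha : ∀ v, c v = a → G.Adj v x → ¬ G.Adj v y) : Nonempty (G.Coloring (Option α)) := by
  classical
  let col : V → Option α := fun v =>
    if hv : v ∈ ({x, y} : Set V)ᶜ then
      if c ⟨v, hv⟩ = a ∧ G.Adj v x then none else some (c ⟨v, hv⟩)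
    else if v = x then some a else none
  have hcol_x : col x = some a := by simp [col]
  have hcol_y : col y = none := by simp [col, hxy.symm]
  have hcol_none : ∀ v (hv : v ∈ ({x, y} : Set V)ᶜ), col v = none →
      c ⟨v, hv⟩ = a ∧ G.Adj v x := by
    intro v hv h
    simp only [col, dif_pos hv] at h
    split_ifs at h with h'
    exact h'
  have hcol_some : ∀ v (hv : v ∈ ({x, y} : Set V)ᶜ) b, col v = some b →
      c ⟨v, hv⟩ = b ∧ (b = a → ¬ G.Adj v x) := by
    intro v hv b h
    simp only [col, dif_pos hv] at h
    split_ifs at h with h'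
    cases h
    exact ⟨rfl, fun hb hvx => h' ⟨hb, hvx⟩⟩
  have hvalid : ∀ u v, (hu : u ∈ ({x, y} : Set V)ᶜ) → G.Adj u v → col u ≠ col v := by
    intro u v hu huv heq
    by_cases hv : v ∈ ({x, y} : Set V)ᶜ
    · refine c.valid (v := ⟨u, hu⟩) (w := ⟨v, hv⟩) huv ?_
      cases h : col v with
      | none => rw [(hcol_none u hu (heq.trans h)).1, (hcol_none v hv h).1]
      | some b => rw [(hcol_some u hu b (heq.trans h)).1, (hcol_some v hv b h).1]
    · rw [Set.notMem_compl_iff] at hv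
      rcases hv with rfl | rfl
      · exact (hcol_some u hu a (heq.trans hcol_x)).2 rfl huv
      · obtain ⟨hca, hux⟩ := hcol_none u hu (heq.trans hcol_y)
        exact ha ⟨u, hu⟩ hca hux huv
  refine ⟨Coloring.mk col fun {u v} huv heq => ?_⟩
  by_cases hu : u ∈ ({x, y} : Set V)ᶜ
  · exact hvalid u v hu huv heq
  by_cases hv : v ∈ ({x, y} : Set V)ᶜ
  · exact hvalid v u hv huv.symm heq.symm
  rw [Set.notMem_compl_iff] at hu hv
  rcases hu with rfl | rfl <;> rcases hv with rfl | rfl <;>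
    first | exact huv.ne rfl | simp [hcol_x, hcol_y] at heq

theorem exists_adj_adj_of_not_colorable [Fintype α] (hxy : x ≠ y)
    (c : (G.induce ({x, y} : Set V)ᶜ).Coloring α) (hG : ¬ G.Colorable (Fintype.card α + 1))
    (a : α) : ∃ v, c v = a ∧ G.Adj v x ∧ G.Adj v y := by
  by_contra! h
  obtain ⟨c'⟩ := nonempty_coloring_option_of_induce_compl_pair hxy c a h
  exact hG (by simpa using c'.colorable)

variable [Fintype α] {B T : Finset V}

theorem card_add_two_le_of_not_colorable (hxy : G.Adj x y)
    (c : (G.induce ({x, y} : Set V)ᶜ).Coloring α) (hG : ¬ G.Colorable (Fintype.card α + 1))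
    (hx : x ∈ B) (hy : y ∈ B) (hB : ∀ v, G.Adj v x → G.Adj v y → v ∈ B) :
    Fintype.card α + 2 ≤ #B := by
  classical
  have hsurj : Set.SurjOn c (B.subtype (· ∈ ({x, y} : Set V)ᶜ)) (univ : Finset α) := fun a _ => by
    obtain ⟨v, hva, hvx, hvy⟩ := exists_adj_adj_of_not_colorable hxy.ne c hG a
    exact ⟨v, mem_subtype.2 (hB v hvx hvy), hva⟩
  have hpair : {x, y} ⊆ B := insert_subset hx (singleton_subset_iff.2 hy)
  have hcompl : B.filter (· ∈ ({x, y} : Set V)ᶜ) = B \ {x, y} := by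
    ext
    simp [and_comm]
  have h := card_le_card_of_surjOn c hsurj
  rw [card_univ, card_subtype, hcompl, card_sdiff_of_subset hpair, card_pair hxy.ne] at h
  have := card_le_card hpair
  rw [card_pair hxy.ne] at this
  omega

theorem card_le_mul_card_of_not_colorable (hxy : G.Adj x y)
    (c : (G.induce ({x, y} : Set V)ᶜ).Coloring α) (hG : ¬ G.Colorable (Fintype.card α + 1))
    (hx : x ∈ B) (hy : y ∈ B) (hB : ∀ v, G.Adj v x → G.Adj v y → v ∈ B) {k : ℕ}
    (hα : G.IndepSetFree (k + 2)) (hBT : Disjoint B T) : #T ≤ k * Fintype.card α := by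
  classical
  have hTS : #(T.subtype (· ∈ ({x, y} : Set V)ᶜ)) = #T := by
    rw [card_subtype, filter_true_of_mem]
    rintro v hv (rfl | rfl)
    exacts [Finset.disjoint_left.1 hBT hx hv, Finset.disjoint_left.1 hBT hy hv]
  rw [← hTS]
  refine card_le_mul_card_of_indepSetFree c (hα.comap (Embedding.induce _)) _ fun a => ?_
  obtain ⟨v, hva, hvx, hvy⟩ := exists_adj_adj_of_not_colorable hxy.ne c hG a
  exact ⟨v, fun hv => Finset.disjoint_left.1 hBT (hB v hvx hvy) (mem_subtype.1 hv), hva⟩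

theorem not_colorable_of_not_isTihany [Fintype V] (h : ¬ G.IsTihany x y) :
    ¬ G.Colorable ((G.induce ({x, y} : Set V)ᶜ).chromaticNumber.toNat + 1) := fun hc =>
  h <| (tsub_le_tsub_right hc.chromaticNumber_le 1).trans
    (by simpa using ENat.natCast_toNat_le_self _)

theorem card_le_mul_card_sub_two_of_not_isTihany [Fintype V] (hxy : G.Adj x y)
    (hnot : ¬ G.IsTihany x y) (hx : x ∈ B) (hy : y ∈ B)
    (hB : ∀ v, G.Adj v x → G.Adj v y → v ∈ B) {k : ℕ} (hα : G.IndepSetFree (k + 2))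
    (hBT : Disjoint B T) : #T ≤ k * (#B - 2) := by
  obtain ⟨m, hm, ⟨c⟩⟩ : ∃ m, ¬ G.Colorable (m + 1) ∧ (G.induce ({x, y} : Set V)ᶜ).Colorable m :=
    ⟨_, not_colorable_of_not_isTihany hnot, colorable_chromaticNumber_of_fintype _⟩
  rw [← Fintype.card_fin m] at hm
  have hmB := card_add_two_le_of_not_colorable hxy c hm hx hy hB
  calc #T ≤ k * Fintype.card (Fin m) := card_le_mul_card_of_not_colorable hxy c hm hx hy hB hα hBT
    _ ≤ k * (#B - 2) := Nat.mul_le_mul_left _ (by omega)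

end Brace

end SimpleGraph

instance : DecidableRel icosahedron.Adj := fun _ _ => inferInstanceAs (Decidable (_ ∧ _))

theorem icosahedron_adj_one_three : icosahedron.Adj 1 3 := by decide

theorem icosahedron_mem_of_adj_one_of_adj_three : ∀ i : Fin 12,
    (i = 1 ∨ icosahedron.Adj i 1) → (i = 3 ∨ icosahedron.Adj i 3) →
    i ∈ ({0, 1, 2, 3} : Finset (Fin 12)) := by
  decide

theorem icosahedron_indepSetFree : icosahedron.IndepSetFree 4 := by
  have h : ∀ a b c d : Fin 12, a ≠ b → a ≠ c → a ≠ d → b ≠ c → b ≠ d → c ≠ d →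
      icosahedron.Adj a b ∨ icosahedron.Adj a c ∨ icosahedron.Adj a d ∨
      icosahedron.Adj b c ∨ icosahedron.Adj b d ∨ icosahedron.Adj c d := by
    decide
  intro t ht
  obtain ⟨a, b, c, d, hab, hac, had, hbc, hbd, hcd, rfl⟩ := card_eq_four.1 ht.card_eq
  rcases h a b c d hab hac had hbc hbd hcd with h | h | h | h | h | h <;>
    exact ht.isIndepSet (by simp) (by simp) (by assumption) h

theorem stmt11_general {V : Type*} [Fintype V] (G : SimpleGraph V)
    (f : V → Fin 12)
    (hadj : ∀ u v : V, G.Adj u v ↔ u ≠ v ∧ (f u = f v ∨ icosahedron.Adj (f u) (f v)))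
    (hnoT : ∀ x y : V, G.Adj x y →
      ¬ (G.chromaticNumber - 1 ≤ (G.induce (({x, y} : Set V)ᶜ)).chromaticNumber))
    (w : Fin 12 → ℕ)
    (hw : ∀ i, w i = (Finset.univ.filter (fun v : V => f v = i)).card)
    (x₁ x₃ : V) (hx₁ : f x₁ = 1) (hx₃ : f x₃ = 3) :
    w 4 + w 5 + w 6 + w 7 + w 8 + w 9 + w 10 + w 11 ≤
      2 * (w 0 + w 1 + w 2 + w 3 - 2) := by
  classical
  have h13 : G.Adj x₁ x₃ := (hadj x₁ x₃).2
    ⟨fun h => by simp [h, hx₃] at hx₁, .inr (hx₁ ▸ hx₃ ▸ icosahedron_adj_one_three)⟩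
  have hα : G.IndepSetFree 4 := indepSetFree_of_adj_of_ne f
    (fun u v huv h => (hadj u v).2 ⟨huv, h⟩) icosahedron_indepSetFree
  set t : Finset (Fin 12) := {0, 1, 2, 3}
  have hcommon : ∀ v, G.Adj v x₁ → G.Adj v x₃ → v ∈ ({v | f v ∈ t} : Finset V) := by
    intro v h₁ h₃
    simp only [mem_filter, mem_univ, true_and]
    apply icosahedron_mem_of_adj_one_of_adj_three
    · simpa [hx₁] using ((hadj _ _).1 h₁).2
    · simpa [hx₃] using ((hadj _ _).1 h₃).2
  have key := card_le_mul_card_sub_two_of_not_isTihany h13 (hnoT x₁ x₃ h13)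
    (by simp [t, hx₁]) (by simp [t, hx₃]) hcommon hα (T := {v | f v ∈ tᶜ})
    (disjoint_filter.2 fun _ _ h h' => mem_compl.1 h' h)
  have hweight : ∀ s, #({v | f v ∈ s} : Finset V) = ∑ i ∈ s, w i := fun s => by
    simp only [hw, sum_card_fiberwise_eq_card_filter]
  rw [hweight, hweight, show tᶜ = {4, 5, 6, 7, 8, 9, 10, 11} by decide] at key
  simpa [t, add_assoc] using key

/-- In a thickening `G` of the icosahedron with `χ(G) > ω(G)` and no Tihany brace, the
weights satisfy `w_4 + ⋯ + w_11 ≤ 2 (w_0 + w_1 + w_2 + w_3 - 2)` (coming from the brace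
`{x_1, x_3}`). -/
theorem stmt11 {V : Type*} [Fintype V] [DecidableEq V] (G : SimpleGraph V)
    (f : V → Fin 12) (hsurj : Function.Surjective f)
    (hadj : ∀ u v : V, G.Adj u v ↔ u ≠ v ∧ (f u = f v ∨ icosahedron.Adj (f u) (f v)))
    (hχω : (G.cliqueNum : ℕ∞) < G.chromaticNumber)
    (hnoT : ∀ x y : V, G.Adj x y →
      ¬ (G.chromaticNumber - 1 ≤ (G.induce (({x, y} : Set V)ᶜ)).chromaticNumber))
    (w : Fin 12 → ℕ)
    (hw : ∀ i, w i = (Finset.univ.filter (fun v : V => f v = i)).card)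
    (x₁ x₃ : V) (hx₁ : f x₁ = 1) (hx₃ : f x₃ = 3) :
    w 4 + w 5 + w 6 + w 7 + w 8 + w 9 + w 10 + w 11 ≤
      2 * (w 0 + w 1 + w 2 + w 3 - 2) :=
  stmt11_general G f hadj hnoT w hw x₁ x₃ hx₁ hx₃
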